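/- arXiv:2008.12890 — 5 statements merged into one kernel-verified Lean document; each statement's English description precedes it below -/
import Mathlib

section
/- For β < 0, θ > 0, and x₀ ≥ 0, the function x_F(t) = (√(-2β)/θ) · [(√(-2β)+θx₀)(1-e^{-√(-2β)θt}) + 2θx₀ e^{-√(-2β)θt}] / [(√(-2β)+θx₀)(1-e^{-√(-2β)θt}) + 2√(-2β) e^{-√(-2β)θt}] satisfies the ODE x'(t) = -β - (θ²/2)x(t)² with x(0) = x₀, for all t ≥ 0. -/
/-!
Writing `s = √(-2β)` and `E = exp (-sθt)`, the numerator and denominator of `x_F` are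
`A ∓ B E` with `A = s + θx₀`, `B = s - θx₀`, so `x_F = (s/θ) g` for the ratio
`g = (A - B E) / (A + B E)`, a shifted `tanh (sθt/2)`. Such a ratio solves the Riccati equation
`g' = (sθ/2)(1 - g²)`, which after scaling by `s/θ` is the fluid equation since `s² = -2β`.
The denominator stays positive for `t ≥ 0` since it lies between `A > 0` and `A + B = 2s > 0`.
-/

open Real

noncomputable def decayRatio (A B k t : ℝ) : ℝ :=
  (A - B * exp (-k * t)) / (A + B * exp (-k * t))

theorem hasDerivAt_decayRatio {A B k t : ℝ} (h : A + B * exp (-k * t) ≠ 0) :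
    HasDerivAt (decayRatio A B k) (k / 2 * (1 - decayRatio A B k t ^ 2)) t := by
  have hE : HasDerivAt (fun u => exp (-k * u)) (exp (-k * t) * -k) t := by
    simpa using ((hasDerivAt_id t).const_mul (-k)).exp
  have hq := ((hE.const_mul B).const_sub A).div ((hE.const_mul B).const_add A) h
  refine hq.congr_deriv ?_
  simp only [decayRatio]
  generalize exp (-k * t) = E at h ⊢
  field_simp
  ring

theorem decayRatio_zero (A B k : ℝ) : decayRatio A B k 0 = (A - B) / (A + B) := by
  simp [decayRatio]

theorem add_mul_exp_neg_pos {A B k t : ℝ} (hA : 0 < A) (hAB : 0 < A + B) (hk : 0 ≤ k)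
    (ht : 0 ≤ t) : 0 < A + B * exp (-k * t) := by
  have hE₀ : 0 < exp (-k * t) := exp_pos _
  have hE₁ : exp (-k * t) ≤ 1 := exp_le_one_iff.mpr (by nlinarith)
  nlinarith

theorem fluid_solution_neg_beta (β θ x₀ : ℝ) (hβ : β < 0) (hθ : 0 < θ) (hx₀ : 0 ≤ x₀)
    (xF : ℝ → ℝ)
    (hxF : ∀ t : ℝ,
      xF t = (Real.sqrt (-2 * β) / θ) *
        (((Real.sqrt (-2 * β) + θ * x₀) * (1 - Real.exp (-(Real.sqrt (-2 * β)) * θ * t))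
            + 2 * θ * x₀ * Real.exp (-(Real.sqrt (-2 * β)) * θ * t)) /
          ((Real.sqrt (-2 * β) + θ * x₀) * (1 - Real.exp (-(Real.sqrt (-2 * β)) * θ * t))
            + 2 * Real.sqrt (-2 * β) * Real.exp (-(Real.sqrt (-2 * β)) * θ * t)))) :
    xF 0 = x₀ ∧ ∀ t : ℝ, 0 ≤ t →
      HasDerivAt xF (-β - θ ^ 2 / 2 * (xF t) ^ 2) t := by
  set s := Real.sqrt (-2 * β)
  have hs : 0 < s := Real.sqrt_pos.mpr (by linarith)
  have hs2 : s ^ 2 = -2 * β := Real.sq_sqrt (by linarith)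
  have hxF_eq : xF = fun t => s / θ * decayRatio (s + θ * x₀) (s - θ * x₀) (s * θ) t := by
    funext t
    rw [hxF, decayRatio, show -s * θ * t = -(s * θ) * t by ring]
    ring
  clear hxF
  subst hxF_eq
  refine ⟨?_, fun t ht => ?_⟩
  · beta_reduce
    rw [decayRatio_zero, show s + θ * x₀ - (s - θ * x₀) = 2 * θ * x₀ by ring,
      show s + θ * x₀ + (s - θ * x₀) = 2 * s by ring]
    field_simp
  · have hpos : 0 < s + θ * x₀ + (s - θ * x₀) * exp (-(s * θ) * t) :=
      add_mul_exp_neg_pos (by positivity) (by linarith) (by positivity) ht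
    refine ((hasDerivAt_decayRatio hpos.ne').const_mul (s / θ)).congr_deriv ?_
    field_simp
    linear_combination hs2
end

section
/- For β ≤ 0 and θ > 0, the initial value problem x'(t) = -β - (θ²/2)x(t)², x(0) = x₀ with x₀ ≥ 0, has a unique solution on [0, ∞). -/
/-!
Uniqueness: the right-hand side `-β - θ²/2 · x²` is smooth, hence Lipschitz on the compact set
swept out by two solutions over `[0, b]`, and Grönwall's inequality forces them to agree there.

Existence: the Riccati equation `x' = c - a x²` linearises under `x = N / D` to the system
`N' = c D`, `D' = a N`. For `c = 0` this gives `x₀ / (1 + a x₀ t)`; for `c = a p² > 0` it gives a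
quotient of hyperbolic functions of `a p t`. In both cases `D ≥ 1` on `[0, ∞)` because `x₀ ≥ 0`.
-/

open Set

section Uniqueness

variable {E : Type*} [NormedAddCommGroup E] [NormedSpace ℝ E]

theorem eqOn_Ici_of_hasDerivWithinAt_of_locallyLipschitz {v : E → E} (hv : LocallyLipschitz v)
    {f g : ℝ → E} {t₀ : ℝ}
    (hf : ∀ t ∈ Ici t₀, HasDerivWithinAt f (v (f t)) (Ici t₀) t)
    (hg : ∀ t ∈ Ici t₀, HasDerivWithinAt g (v (g t)) (Ici t₀) t)
    (h₀ : f t₀ = g t₀) : EqOn f g (Ici t₀) := by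
  intro b hb
  have hcont : ∀ u : ℝ → E, (∀ t ∈ Ici t₀, HasDerivWithinAt u (v (u t)) (Ici t₀) t) →
      ContinuousOn u (Icc t₀ b) := fun u hu t ht =>
    (hu t ht.1).continuousWithinAt.mono Icc_subset_Ici_self
  have hderiv : ∀ u : ℝ → E, (∀ t ∈ Ici t₀, HasDerivWithinAt u (v (u t)) (Ici t₀) t) →
      ∀ t ∈ Ico t₀ b, HasDerivWithinAt u (v (u t)) (Ici t) t := fun u hu t ht =>
    (hu t ht.1).mono (Ici_subset_Ici.mpr ht.1)
  set K := f '' Icc t₀ b ∪ g '' Icc t₀ b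
  have hK : IsCompact K :=
    (isCompact_Icc.image_of_continuousOn (hcont f hf)).union
      (isCompact_Icc.image_of_continuousOn (hcont g hg))
  obtain ⟨L, hL⟩ := hv.locallyLipschitzOn.exists_lipschitzOnWith_of_compact hK
  refine ODE_solution_unique_of_mem_Icc_right (v := fun _ => v) (s := fun _ => K)
    (fun _ _ => hL) (hcont f hf) (hderiv f hf) ?_ (hcont g hg) (hderiv g hg) ?_ h₀ ⟨hb, le_rfl⟩
  · exact fun t ht => Or.inl (mem_image_of_mem f (Ico_subset_Icc_self ht))
  · exact fun t ht => Or.inr (mem_image_of_mem g (Ico_subset_Icc_self ht))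

end Uniqueness

theorem hasDerivAt_riccati_of_linear {a c t : ℝ} {N D : ℝ → ℝ}
    (hN : HasDerivAt N (c * D t) t) (hD : HasDerivAt D (a * N t) t) (hDt : D t ≠ 0) :
    HasDerivAt (fun s => N s / D s) (c - a * (N t / D t) ^ 2) t :=
  (hN.div hD hDt).congr_deriv (by field_simp)

theorem exists_linear_system_solution {a c x₀ : ℝ} (ha : 0 < a) (hc : 0 ≤ c) (hx₀ : 0 ≤ x₀) :
    ∃ N D : ℝ → ℝ, N 0 = x₀ ∧ D 0 = 1 ∧ ∀ t, 0 ≤ t →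
      1 ≤ D t ∧ HasDerivAt N (c * D t) t ∧ HasDerivAt D (a * N t) t := by
  rcases hc.eq_or_lt with rfl | hc
  · refine ⟨fun _ => x₀, fun t => 1 + a * x₀ * t, rfl, by simp, fun t ht => ⟨?_, ?_, ?_⟩⟩
    · exact le_add_of_nonneg_right (by positivity)
    · simpa using hasDerivAt_const t x₀
    · simpa using ((hasDerivAt_id t).const_mul (a * x₀)).const_add 1
  obtain ⟨p, hp, rfl⟩ : ∃ p, 0 < p ∧ c = a * p ^ 2 :=
    ⟨√(c / a), by positivity, by rw [Real.sq_sqrt (by positivity)]; field_simp⟩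
  have hlin (t : ℝ) : HasDerivAt (fun s => a * p * s) (a * p) t := by
    simpa using (hasDerivAt_id t).const_mul (a * p)
  refine ⟨fun t => x₀ * Real.cosh (a * p * t) + p * Real.sinh (a * p * t),
    fun t => Real.cosh (a * p * t) + x₀ / p * Real.sinh (a * p * t), by simp, by simp,
    fun t ht => ⟨?_, ?_, ?_⟩⟩
  · have hcosh := Real.one_le_cosh (a * p * t)
    have hsinh : 0 ≤ x₀ / p * Real.sinh (a * p * t) :=
      mul_nonneg (by positivity) (Real.sinh_nonneg_iff.mpr (by positivity))
    linarith
  · exact (((hlin t).cosh.const_mul x₀).add ((hlin t).sinh.const_mul p)).congr_deriv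
      (by field_simp; ring)
  · exact ((hlin t).cosh.add ((hlin t).sinh.const_mul (x₀ / p))).congr_deriv
      (by field_simp; ring)

theorem exists_riccati_solution {a c x₀ : ℝ} (ha : 0 < a) (hc : 0 ≤ c) (hx₀ : 0 ≤ x₀) :
    ∃ x : ℝ → ℝ, x 0 = x₀ ∧ ∀ t, 0 ≤ t → HasDerivAt x (c - a * x t ^ 2) t := by
  obtain ⟨N, D, hN₀, hD₀, hND⟩ := exists_linear_system_solution ha hc hx₀
  refine ⟨fun t => N t / D t, by simp [hN₀, hD₀], fun t ht => ?_⟩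
  obtain ⟨hD_ge, hN', hD'⟩ := hND t ht
  exact hasDerivAt_riccati_of_linear hN' hD' (by linarith)

theorem fluid_IVP_exists_unique (β θ x₀ : ℝ) (hβ : β ≤ 0) (hθ : 0 < θ) (hx₀ : 0 ≤ x₀) :
    ∃ x : ℝ → ℝ,
      (x 0 = x₀ ∧
        ∀ t ∈ Set.Ici (0 : ℝ),
          HasDerivWithinAt x (-β - θ ^ 2 / 2 * (x t) ^ 2) (Set.Ici 0) t) ∧
      ∀ y : ℝ → ℝ,
        (y 0 = x₀ ∧
          ∀ t ∈ Set.Ici (0 : ℝ),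
            HasDerivWithinAt y (-β - θ ^ 2 / 2 * (y t) ^ 2) (Set.Ici 0) t) →
        Set.EqOn y x (Set.Ici 0) := by
  obtain ⟨x, hx₀', hx⟩ :=
    exists_riccati_solution (a := θ ^ 2 / 2) (c := -β) (by positivity) (by linarith) hx₀
  refine ⟨x, ⟨hx₀', fun t ht => (hx t ht).hasDerivWithinAt⟩, fun y ⟨hy₀, hy⟩ => ?_⟩
  have hv : LocallyLipschitz fun z : ℝ => -β - θ ^ 2 / 2 * z ^ 2 :=
    ContDiff.locallyLipschitz (𝕂 := ℝ) (by fun_prop)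
  exact eqOn_Ici_of_hasDerivWithinAt_of_locallyLipschitz hv hy
    (fun t ht => (hx t ht).hasDerivWithinAt) (hy₀.trans hx₀'.symm)
end

section
/- For β ≤ 0 and θ > 0, the point x* = √(-2β)/θ is a globally asymptotically stable stationary point of the ODE x'(t) = -β - (θ²/2)x(t)² restricted to nonnegative initial conditions: if x(0) = x* then x(t) = x* for all t ≥ 0, and for every solution with x(0) = x₀ ≥ 0, x(t) → x* as t → ∞. -/
/-!
Write `c = √(-2β)/θ`, so that the vector field is `a (c² - y²)` with `a = θ²/2`, whose
equilibria are `±c`. The field is locally Lipschitz, so solutions are unique forwards and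
backwards in time, and a solution that does not start at an equilibrium never reaches one.
Hence a solution starting above `c` stays above `c`, where the field is negative, and one starting
in `[0, c)` stays in `(-c, c)`, where it is positive. Either way the solution is monotone and
bounded, so it converges; the limit of a convergent solution is a zero of the field, and the only
nonnegative zero is `c`.
-/

open Set Filter Topology

theorem eq_zero_of_tendsto_of_hasDerivAt {f f' : ℝ → ℝ} {L l : ℝ}
    (hf : ∀ᶠ t in atTop, HasDerivAt f (f' t) t) (hfL : Tendsto f atTop (𝓝 L))
    (hf'l : Tendsto f' atTop (𝓝 l)) : l = 0 := by
  obtain ⟨T, hT⟩ := eventually_atTop.1 hf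
  have hmvt : ∀ t ≥ T, ∃ ξ ∈ Ioo t (t + 1), f' ξ = f (t + 1) - f t := by
    intro t ht
    have hderiv : ∀ u ∈ Icc t (t + 1), HasDerivAt f (f' u) u := fun u hu => hT u (ht.trans hu.1)
    obtain ⟨ξ, hξ, hslope⟩ := exists_hasDerivAt_eq_slope f f' (lt_add_one t)
      (HasDerivAt.continuousOn hderiv) fun u hu => hderiv u (Ioo_subset_Icc_self hu)
    exact ⟨ξ, hξ, by simpa using hslope⟩
  choose! ξ hξ hf'ξ using hmvt
  have hξ_tendsto : Tendsto ξ atTop atTop :=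
    tendsto_atTop_mono' _ ((eventually_ge_atTop T).mono fun t ht => (hξ t ht).1.le) tendsto_id
  have hincr_zero : Tendsto (fun t => f (t + 1) - f t) atTop (𝓝 (L - L)) :=
    (hfL.comp (tendsto_atTop_add_const_right _ 1 tendsto_id)).sub hfL
  have hincr_l : Tendsto (fun t => f (t + 1) - f t) atTop (𝓝 l) :=
    (hf'l.comp hξ_tendsto).congr' ((eventually_ge_atTop T).mono fun t ht => hf'ξ t ht)
  simpa using tendsto_nhds_unique hincr_l hincr_zero

theorem MonotoneOn.exists_tendsto_atTop_of_le {f : ℝ → ℝ} {a b : ℝ}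
    (hf : MonotoneOn f (Ici a)) (hb : ∀ t, a ≤ t → f t ≤ b) :
    ∃ L, Tendsto f atTop (𝓝 L) :=
  ⟨_, tendsto_comp_val_Ici_atTop.1 <| tendsto_atTop_ciSup (fun s t hst => hf s.2 t.2 hst)
    ⟨b, by rintro _ ⟨t, rfl⟩; exact hb t t.2⟩⟩

theorem AntitoneOn.exists_tendsto_atTop_of_ge {f : ℝ → ℝ} {a b : ℝ}
    (hf : AntitoneOn f (Ici a)) (hb : ∀ t, a ≤ t → b ≤ f t) :
    ∃ L, Tendsto f atTop (𝓝 L) :=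
  ⟨_, tendsto_comp_val_Ici_atTop.1 <| tendsto_atTop_ciInf (fun s t hst => hf s.2 t.2 hst)
    ⟨b, by rintro _ ⟨t, rfl⟩; exact hb t t.2⟩⟩

def IsForwardSolution (F x : ℝ → ℝ) : Prop :=
  ∀ t ∈ Ici (0 : ℝ), HasDerivWithinAt x (F (x t)) (Ici 0) t

namespace IsForwardSolution

variable {F x y : ℝ → ℝ}

theorem continuousOn (hx : IsForwardSolution F x) : ContinuousOn x (Ici 0) :=
  fun t ht => (hx t ht).continuousWithinAt

theorem hasDerivAt (hx : IsForwardSolution F x) {t : ℝ} (ht : 0 < t) :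
    HasDerivAt x (F (x t)) t :=
  (hx t ht.le).hasDerivAt (Ici_mem_nhds ht)

theorem const {e : ℝ} (he : F e = 0) : IsForwardSolution F fun _ => e :=
  fun t _ => he ▸ hasDerivWithinAt_const t _ e

theorem eqOn_of_apply_eq (hF : LocallyLipschitz F) (hx : IsForwardSolution F x)
    (hy : IsForwardSolution F y) {s : ℝ} (hs : 0 ≤ s) (hxy : x s = y s) : EqOn x y (Ici 0) := by
  intro t (ht : 0 ≤ t)
  set T := max s t
  have hsub : Icc 0 T ⊆ Ici 0 := Icc_subset_Ici_self
  set S := x '' Icc 0 T ∪ y '' Icc 0 T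
  obtain ⟨K, hK⟩ := hF.locallyLipschitzOn.exists_lipschitzOnWith_of_compact <|
    (isCompact_Icc.image_of_continuousOn (hx.continuousOn.mono hsub)).union
      (isCompact_Icc.image_of_continuousOn (hy.continuousOn.mono hsub))
  have hxS : ∀ u ∈ Icc 0 T, x u ∈ S := fun u hu => Or.inl ⟨u, hu, rfl⟩
  have hyS : ∀ u ∈ Icc 0 T, y u ∈ S := fun u hu => Or.inr ⟨u, hu, rfl⟩
  rcases le_total t s with hts | hst
  · have hIoc : Ioc 0 s ⊆ Icc 0 T := fun u hu => ⟨hu.1.le, hu.2.trans (le_max_left s t)⟩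
    refine ODE_solution_unique_of_mem_Icc_left (v := fun _ => F) (s := fun _ => S)
      (fun _ _ => hK) (hx.continuousOn.mono Icc_subset_Ici_self)
      (fun u hu => (hx.hasDerivAt hu.1).hasDerivWithinAt) (fun u hu => hxS u (hIoc hu))
      (hy.continuousOn.mono Icc_subset_Ici_self)
      (fun u hu => (hy.hasDerivAt hu.1).hasDerivWithinAt) (fun u hu => hyS u (hIoc hu)) hxy
      ⟨ht, hts⟩
  · have hIci : ∀ u ∈ Ico s t, Ici u ⊆ Ici 0 := fun u hu => Ici_subset_Ici.2 (hs.trans hu.1)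
    have hIco : Ico s t ⊆ Icc 0 T := fun u hu =>
      ⟨hs.trans hu.1, hu.2.le.trans (le_max_right s t)⟩
    refine ODE_solution_unique_of_mem_Icc_right (v := fun _ => F) (s := fun _ => S)
      (fun _ _ => hK) (hx.continuousOn.mono fun u hu => hs.trans hu.1)
      (fun u hu => (hx u (hs.trans hu.1)).mono (hIci u hu)) (fun u hu => hxS u (hIco hu))
      (hy.continuousOn.mono fun u hu => hs.trans hu.1)
      (fun u hu => (hy u (hs.trans hu.1)).mono (hIci u hu)) (fun u hu => hyS u (hIco hu)) hxy
      ⟨hst, le_rfl⟩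

theorem apply_ne (hF : LocallyLipschitz F) (hx : IsForwardSolution F x) {e : ℝ} (he : F e = 0)
    (h0 : x 0 ≠ e) {t : ℝ} (ht : 0 ≤ t) : x t ≠ e := fun hxt =>
  h0 (eqOn_of_apply_eq hF hx (const he) ht hxt self_mem_Ici)

theorem apply_lt (hF : LocallyLipschitz F) (hx : IsForwardSolution F x) {e : ℝ} (he : F e = 0)
    (h0 : x 0 < e) {t : ℝ} (ht : 0 ≤ t) : x t < e := by
  by_contra! hle
  obtain ⟨u, hu, hxu⟩ := isPreconnected_Ici.intermediate_value self_mem_Ici (mem_Ici.2 ht)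
    hx.continuousOn ⟨h0.le, hle⟩
  exact hx.apply_ne hF he h0.ne hu hxu

theorem lt_apply (hF : LocallyLipschitz F) (hx : IsForwardSolution F x) {e : ℝ} (he : F e = 0)
    (h0 : e < x 0) {t : ℝ} (ht : 0 ≤ t) : e < x t := by
  by_contra! hle
  obtain ⟨u, hu, hxu⟩ := isPreconnected_Ici.intermediate_value (mem_Ici.2 ht) self_mem_Ici
    hx.continuousOn ⟨hle, h0.le⟩
  exact hx.apply_ne hF he h0.ne' hu hxu

theorem monotoneOn (hx : IsForwardSolution F x) (hF : ∀ t, 0 < t → 0 ≤ F (x t)) :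
    MonotoneOn x (Ici 0) :=
  monotoneOn_of_hasDerivWithinAt_nonneg (convex_Ici 0) hx.continuousOn
    (fun t ht => (hx.hasDerivAt (by simpa using ht)).hasDerivWithinAt)
    fun t ht => hF t (by simpa using ht)

theorem antitoneOn (hx : IsForwardSolution F x) (hF : ∀ t, 0 < t → F (x t) ≤ 0) :
    AntitoneOn x (Ici 0) :=
  antitoneOn_of_hasDerivWithinAt_nonpos (convex_Ici 0) hx.continuousOn
    (fun t ht => (hx.hasDerivAt (by simpa using ht)).hasDerivWithinAt)
    fun t ht => hF t (by simpa using ht)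

theorem apply_eq_zero_of_tendsto (hF : Continuous F) (hx : IsForwardSolution F x) {L : ℝ}
    (hL : Tendsto x atTop (𝓝 L)) : F L = 0 :=
  eq_zero_of_tendsto_of_hasDerivAt ((eventually_gt_atTop 0).mono fun _ => hx.hasDerivAt) hL
    ((hF.tendsto L).comp hL)

end IsForwardSolution

def riccati (a c y : ℝ) : ℝ := a * (c ^ 2 - y ^ 2)

section Riccati

variable {a c : ℝ} {x : ℝ → ℝ}

theorem riccati_locallyLipschitz : LocallyLipschitz (riccati a c) :=
  ContDiff.locallyLipschitz (𝕂 := ℝ) (by unfold riccati; fun_prop)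

theorem riccati_self : riccati a c c = 0 := by simp [riccati]

theorem riccati_neg_self : riccati a c (-c) = 0 := by simp [riccati]

theorem eq_of_riccati_eq_zero (ha : 0 < a) (hc : 0 ≤ c) {y : ℝ} (hy : 0 ≤ y)
    (h : riccati a c y = 0) : y = c := by
  have hsq : y ^ 2 = c ^ 2 := by
    linarith [(mul_eq_zero.1 h).resolve_left ha.ne']
  exact (pow_left_inj₀ hy hc two_ne_zero).1 hsq

namespace IsForwardSolution

theorem riccati_limit_eq (ha : 0 < a) (hc : 0 ≤ c) (hx : IsForwardSolution (riccati a c) x)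
    {L : ℝ} (hL : Tendsto x atTop (𝓝 L)) (hL0 : 0 ≤ L) : L = c :=
  eq_of_riccati_eq_zero ha hc hL0 <|
    hx.apply_eq_zero_of_tendsto riccati_locallyLipschitz.continuous hL

theorem riccati_tendsto_of_lt_apply_zero (ha : 0 < a) (hc : 0 ≤ c)
    (hx : IsForwardSolution (riccati a c) x) (h0 : c < x 0) : Tendsto x atTop (𝓝 c) := by
  have hgt : ∀ t, 0 ≤ t → c < x t := fun t ht =>
    hx.lt_apply riccati_locallyLipschitz riccati_self h0 ht
  have hanti : AntitoneOn x (Ici 0) := hx.antitoneOn fun t ht => by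
    have hxt := hgt t ht.le
    exact mul_nonpos_of_nonneg_of_nonpos ha.le (by nlinarith)
  obtain ⟨L, hL⟩ := hanti.exists_tendsto_atTop_of_ge fun t ht => (hgt t ht).le
  have hcL : c ≤ L := ge_of_tendsto hL <| (eventually_ge_atTop 0).mono fun t ht => (hgt t ht).le
  rwa [hx.riccati_limit_eq ha hc hL (hc.trans hcL)] at hL

theorem riccati_tendsto_of_apply_zero_lt (ha : 0 < a) (hx : IsForwardSolution (riccati a c) x)
    (h0 : 0 ≤ x 0) (h0c : x 0 < c) : Tendsto x atTop (𝓝 c) := by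
  have hlt : ∀ t, 0 ≤ t → x t < c := fun t ht =>
    hx.apply_lt riccati_locallyLipschitz riccati_self h0c ht
  have hgt : ∀ t, 0 ≤ t → -c < x t := fun t ht =>
    hx.lt_apply riccati_locallyLipschitz riccati_neg_self (by linarith) ht
  have hmono : MonotoneOn x (Ici 0) := hx.monotoneOn fun t ht => by
    have hxc := hlt t ht.le
    have hcx := hgt t ht.le
    exact mul_nonneg ha.le (by nlinarith)
  obtain ⟨L, hL⟩ := hmono.exists_tendsto_atTop_of_le fun t ht => (hlt t ht).le
  have hL0 : x 0 ≤ L := ge_of_tendsto hL <|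
    (eventually_ge_atTop 0).mono fun t ht => hmono self_mem_Ici ht ht
  rwa [hx.riccati_limit_eq ha (by linarith) hL (h0.trans hL0)] at hL

theorem riccati_tendsto (ha : 0 < a) (hc : 0 ≤ c) (hx : IsForwardSolution (riccati a c) x)
    (h0 : 0 ≤ x 0) : Tendsto x atTop (𝓝 c) := by
  rcases lt_trichotomy (x 0) c with h0c | h0c | h0c
  · exact hx.riccati_tendsto_of_apply_zero_lt ha h0 h0c
  · refine tendsto_const_nhds.congr' <| (eventually_ge_atTop 0).mono fun t ht => ?_
    exact (hx.eqOn_of_apply_eq riccati_locallyLipschitz (const riccati_self) le_rfl h0c ht).symm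
  · exact hx.riccati_tendsto_of_lt_apply_zero ha hc h0c

end IsForwardSolution

end Riccati

theorem fluid_xstar_stable (β θ : ℝ) (hβ : β ≤ 0) (hθ : 0 < θ) :
    ∀ x : ℝ → ℝ,
      (∀ t ∈ Set.Ici (0 : ℝ),
        HasDerivWithinAt x (-β - θ ^ 2 / 2 * (x t) ^ 2) (Set.Ici 0) t) →
      ((x 0 = Real.sqrt (-2 * β) / θ →
          ∀ t : ℝ, 0 ≤ t → x t = Real.sqrt (-2 * β) / θ) ∧
        (0 ≤ x 0 →
          Filter.Tendsto x Filter.atTop (nhds (Real.sqrt (-2 * β) / θ)))) := by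
  intro x hx
  set c := Real.sqrt (-2 * β) / θ
  have hfield : (fun y => -β - θ ^ 2 / 2 * y ^ 2) = riccati (θ ^ 2 / 2) c := by
    ext y
    simp only [riccati, c, div_pow, Real.sq_sqrt (by linarith : 0 ≤ -2 * β)]
    field_simp
  have hsol : IsForwardSolution (riccati (θ ^ 2 / 2) c) x :=
    hfield ▸ (hx : IsForwardSolution (fun y => -β - θ ^ 2 / 2 * y ^ 2) x)
  exact ⟨fun h0 t ht =>
      hsol.eqOn_of_apply_eq riccati_locallyLipschitz (.const riccati_self) le_rfl h0 ht,
    hsol.riccati_tendsto (by positivity) (by positivity)⟩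
end

section
/- Let β ≤ 0, θ > 0, x₀ ≥ 0, and let (y, ψ) be a pair of continuous functions on [0,∞) with y ≥ 0, ψ(0) = 0, ψ nondecreasing, y(t) = x₀ - βt - (θ²/2)∫₀ᵗ y(s)² ds + ψ(t) for all t, and ∫₀ᵗ 1{y(s) > 0} dψ(s) = 0 for all t. Then ψ ≡ 0 and y equals the unique solution x_F of the IVP x' = -β - (θ²/2)x², x(0) = x₀. -/
/-!
Since `ψ` can only grow at zeros of `y`, for `a ≤ s` either `ψ s = ψ a` or `ψ s = ψ σ` at the last
zero `σ ∈ (a, s]` of `y`, where the equation gives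
`ψ σ - ψ a = -y a + β (σ - a) + c ∫_a^σ y²` with `c = θ²/2`.
This is at most `c ∫_a^s y²`, so `y s ≤ y a - β (s - a)`: the reflection never pushes `y` above
the line of slope `-β`. Feeding this back with `m = y a - β (σ - a)` gives
`ψ σ - ψ a ≤ m (c m (σ - a) - 1) ≤ 0` for `σ` close to `a`. Thus the continuous function `ψ` is
locally constant to the right of every point, hence `ψ ≡ ψ 0 = 0`, and `y` solves the ODE
`x' = -β - c x²`, whose locally Lipschitz right-hand side has unique solutions.
-/

open MeasureTheory Set Topology

theorem StieltjesFunction.apply_eq_of_measure_Ioc_eq_zero (f : StieltjesFunction ℝ) {a b : ℝ}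
    (hab : a ≤ b) (h : f.measure (Ioc a b) = 0) : f b = f a := by
  rw [f.measure_Ioc, ENNReal.ofReal_eq_zero] at h
  exact le_antisymm (by linarith) (f.mono hab)

theorem exists_eq_at_last_zero {y ψ : ℝ → ℝ} {a s : ℝ} (hy : Continuous y) (has : a ≤ s)
    (hnonneg : ∀ u ∈ Icc a s, 0 ≤ y u)
    (hflat : ∀ b ∈ Icc a s, (∀ u ∈ Ioc b s, 0 < y u) → ψ s = ψ b) :
    ∃ σ ∈ Icc a s, ψ s = ψ σ ∧ (σ = a ∨ y σ = 0) := by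
  set Z := Icc a s ∩ {u | u = a ∨ y u = 0}
  have hZ : IsCompact Z := isCompact_Icc.inter_right
    ((isClosed_eq continuous_id continuous_const).union (isClosed_eq hy continuous_const))
  have hσ : sSup Z ∈ Z := hZ.sSup_mem ⟨a, left_mem_Icc.2 has, Or.inl rfl⟩
  refine ⟨sSup Z, hσ.1, hflat _ hσ.1 fun u hu => ?_, hσ.2⟩
  have hu_mem : u ∈ Icc a s := ⟨hσ.1.1.trans hu.1.le, hu.2⟩
  have hu_nmem : u ∉ Z := fun h => hu.1.not_ge (le_csSup hZ.bddAbove h)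
  exact (hnonneg u hu_mem).lt_of_ne' fun h0 => hu_nmem ⟨hu_mem, Or.inr h0⟩

theorem eqOn_Ici_of_hasDerivWithinAt {E : Type*} [NormedAddCommGroup E] [NormedSpace ℝ E]
    [ProperSpace E] {v : E → E} (hv : ContDiff ℝ 1 v) {f g : ℝ → E} {a : ℝ}
    (hf : ∀ t ∈ Ici a, HasDerivWithinAt f (v (f t)) (Ici a) t)
    (hg : ∀ t ∈ Ici a, HasDerivWithinAt g (v (g t)) (Ici a) t) (ha : f a = g a) :
    EqOn f g (Ici a) := by
  intro t ht
  have hcont : ∀ k : ℝ → E, (∀ t ∈ Ici a, HasDerivWithinAt k (v (k t)) (Ici a) t) →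
      ContinuousOn k (Icc a t) :=
    fun k hk u hu => (hk u hu.1).continuousWithinAt.mono Icc_subset_Ici_self
  have hderiv : ∀ k : ℝ → E, (∀ t ∈ Ici a, HasDerivWithinAt k (v (k t)) (Ici a) t) →
      ∀ u ∈ Ico a t, HasDerivWithinAt k (v (k u)) (Ici u) u :=
    fun k hk u hu => (hk u hu.1).mono (Ici_subset_Ici.2 hu.1)
  obtain ⟨R, hR⟩ := (Metric.isBounded_iff_subset_closedBall 0).1
    ((isCompact_Icc.image_of_continuousOn (hcont f hf)).union
      (isCompact_Icc.image_of_continuousOn (hcont g hg))).isBounded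
  obtain ⟨K, hK⟩ := hv.contDiffOn.exists_lipschitzOnWith one_ne_zero (convex_closedBall 0 R)
    (isCompact_closedBall 0 R)
  exact ODE_solution_unique_of_mem_Icc_right (v := fun _ => v)
    (s := fun _ => Metric.closedBall 0 R) (fun _ _ => hK) (hcont f hf) (hderiv f hf)
    (fun u hu => hR (Or.inl (mem_image_of_mem f (Ico_subset_Icc_self hu))))
    (hcont g hg) (hderiv g hg)
    (fun u hu => hR (Or.inr (mem_image_of_mem g (Ico_subset_Icc_self hu)))) ha ⟨ht, le_rfl⟩

/-- `y` solves `y' = -β - c y²` on `[0, ∞)` reflected at `0` with regulator `ψ`; the condition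
`∫ 1{y > 0} dψ = 0` is encoded as constancy of `ψ` on intervals where `y > 0`. -/
structure IsReflectedSolution (x₀ β c : ℝ) (y ψ : ℝ → ℝ) : Prop where
  continuous : Continuous y
  nonneg : ∀ t, 0 ≤ t → 0 ≤ y t
  monotone : Monotone ψ
  flat : ∀ a b, 0 ≤ a → a ≤ b → (∀ u ∈ Ioc a b, 0 < y u) → ψ b = ψ a
  eq : ∀ t, 0 ≤ t → y t = x₀ - β * t - c * (∫ s in (0 : ℝ)..t, y s ^ 2) + ψ t

namespace IsReflectedSolution

variable {x₀ β c : ℝ} {y ψ : ℝ → ℝ}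

theorem sub_eq (h : IsReflectedSolution x₀ β c y ψ) {a t : ℝ} (ha : 0 ≤ a) (hat : a ≤ t) :
    y t - y a = -β * (t - a) - c * (∫ s in a..t, y s ^ 2) + (ψ t - ψ a) := by
  have hint : ∀ p q : ℝ, IntervalIntegrable (fun s => y s ^ 2) volume p q :=
    fun p q => (h.continuous.pow 2).intervalIntegrable p q
  rw [h.eq t (ha.trans hat), h.eq a ha,
    ← intervalIntegral.integral_interval_sub_left (hint 0 t) (hint 0 a)]
  ring

theorem exists_eq_at_last_zero (h : IsReflectedSolution x₀ β c y ψ) {a s : ℝ} (ha : 0 ≤ a)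
    (has : a ≤ s) : ∃ σ ∈ Icc a s, ψ s = ψ σ ∧ (σ = a ∨ y σ = 0) :=
  _root_.exists_eq_at_last_zero h.continuous has (fun u hu => h.nonneg u (ha.trans hu.1))
    fun b hb => h.flat b s (ha.trans hb.1) hb.2

theorem le_sub_mul (h : IsReflectedSolution x₀ β c y ψ) (hβ : β ≤ 0) (hc : 0 ≤ c) {a t : ℝ}
    (ha : 0 ≤ a) (hat : a ≤ t) : y t ≤ y a - β * (t - a) := by
  have hint : IntervalIntegrable (fun s => y s ^ 2) volume a t :=
    (h.continuous.pow 2).intervalIntegrable a t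
  have hincr := h.sub_eq ha hat
  obtain ⟨σ, hσ, hψσ, rfl | hyσ⟩ := h.exists_eq_at_last_zero ha hat
  · have hI : 0 ≤ ∫ s in σ..t, y s ^ 2 :=
      intervalIntegral.integral_nonneg hat fun _ _ => sq_nonneg _
    linarith [mul_nonneg hc hI]
  · have hincrσ := h.sub_eq ha hσ.1
    have hI : ∫ s in a..σ, y s ^ 2 ≤ ∫ s in a..t, y s ^ 2 :=
      intervalIntegral.integral_mono_interval le_rfl hσ.1 hσ.2
        (ae_of_all _ fun _ => sq_nonneg _) hint
    linarith [mul_le_mul_of_nonneg_left hI hc, mul_nonpos_of_nonpos_of_nonneg hβ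
      (sub_nonneg.2 hσ.1), h.nonneg a ha]

theorem apply_eq_of_mul_le_one (h : IsReflectedSolution x₀ β c y ψ) (hβ : β ≤ 0) (hc : 0 ≤ c)
    {a s : ℝ} (ha : 0 ≤ a) (has : a ≤ s) (hsmall : c * (y a - β * (s - a)) * (s - a) ≤ 1) :
    ψ s = ψ a := by
  obtain ⟨σ, hσ, hψσ, rfl | hyσ⟩ := h.exists_eq_at_last_zero ha has
  · exact hψσ
  set m := y a - β * (σ - a)
  have hm : 0 ≤ m := by
    linarith [h.nonneg a ha, mul_nonpos_of_nonpos_of_nonneg hβ (sub_nonneg.2 hσ.1)]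
  have hy_le : ∀ u ∈ Icc a σ, y u ^ 2 ≤ m ^ 2 := fun u hu =>
    pow_le_pow_left₀ (h.nonneg u (ha.trans hu.1)) ((h.le_sub_mul hβ hc ha hu.1).trans
      (by linarith [mul_le_mul_of_nonpos_left hu.2 hβ])) 2
  have hI : ∫ u in a..σ, y u ^ 2 ≤ (σ - a) * m ^ 2 :=
    calc ∫ u in a..σ, y u ^ 2 ≤ ∫ _ in a..σ, m ^ 2 :=
          intervalIntegral.integral_mono_on hσ.1 ((h.continuous.pow 2).intervalIntegrable a σ)
            intervalIntegrable_const hy_le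
      _ = (σ - a) * m ^ 2 := by simp
  have hsmall' : c * m * (σ - a) ≤ 1 := by
    refine le_trans ?_ hsmall
    have : m ≤ y a - β * (s - a) := by linarith [mul_le_mul_of_nonpos_left hσ.2 hβ]
    exact mul_le_mul (mul_le_mul_of_nonneg_left this hc) (by linarith [hσ.2])
      (sub_nonneg.2 hσ.1) (mul_nonneg hc (hm.trans this))
  have hincr := h.sub_eq ha hσ.1
  refine le_antisymm ?_ (h.monotone has)
  linarith [mul_le_mul_of_nonneg_left hI hc, mul_le_mul_of_nonneg_left hsmall' hm]

theorem eventuallyEq_nhdsGE (h : IsReflectedSolution x₀ β c y ψ) (hβ : β ≤ 0) (hc : 0 ≤ c)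
    {a : ℝ} (ha : 0 ≤ a) : ψ =ᶠ[𝓝[≥] a] fun _ => ψ a := by
  have hsmall : ∀ᶠ s in 𝓝 a, c * (y a - β * (s - a)) * (s - a) < 1 :=
    ContinuousAt.eventually_lt (by fun_prop) continuousAt_const (by simp)
  filter_upwards [self_mem_nhdsWithin, nhdsWithin_le_nhds hsmall] with s has hs
  exact h.apply_eq_of_mul_le_one hβ hc ha has hs.le

theorem apply_eq_apply_zero (h : IsReflectedSolution x₀ β c y ψ) (hβ : β ≤ 0) (hc : 0 ≤ c)
    (hψ : Continuous ψ) {t : ℝ} (ht : 0 ≤ t) : ψ t = ψ 0 :=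
  constant_of_has_deriv_right_zero hψ.continuousOn
    (fun a ha => (hasDerivWithinAt_const a _ (ψ a)).congr_of_eventuallyEq
      (h.eventuallyEq_nhdsGE hβ hc ha.1) rfl) t ⟨ht, le_rfl⟩

end IsReflectedSolution

theorem eqOn_of_eq_sub_integral {x₀ β c : ℝ} {y x : ℝ → ℝ} (hy : Continuous y)
    (heq : ∀ t, 0 ≤ t → y t = x₀ - β * t - c * ∫ s in (0 : ℝ)..t, y s ^ 2) (hx0 : x 0 = x₀)
    (hx : ∀ t ∈ Ici (0 : ℝ), HasDerivWithinAt x (-β - c * x t ^ 2) (Ici 0) t) :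
    EqOn y x (Ici 0) := by
  refine eqOn_Ici_of_hasDerivWithinAt (v := fun w => -β - c * w ^ 2) (by fun_prop)
    (fun t ht => ?_) hx (by simpa [hx0] using heq 0 le_rfl)
  have hI := ((hy.pow 2).integral_hasStrictDerivAt 0 t).hasDerivAt
  have hrhs := (((hasDerivAt_id t).const_mul β).const_sub x₀).sub (hI.const_mul c)
  rw [mul_one] at hrhs
  exact hrhs.hasDerivWithinAt.congr (fun r hr => heq r hr) (heq t ht)

theorem skorokhod_problem_trivial_reflection_general (β θ x₀ : ℝ) (hβ : β ≤ 0)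
    (y : ℝ → ℝ) (ψ : StieltjesFunction ℝ)
    (hy_cont : Continuous y) (hψ_cont : Continuous ψ)
    (hy_nonneg : ∀ t : ℝ, 0 ≤ t → 0 ≤ y t)
    (hψ0 : ψ 0 = 0)
    (heq : ∀ t : ℝ, 0 ≤ t →
      y t = x₀ - β * t - θ ^ 2 / 2 * (∫ s in (0 : ℝ)..t, (y s) ^ 2) + ψ t)
    (hflat : ∀ t : ℝ, 0 ≤ t →
      ψ.measure {s | s ∈ Set.Icc (0 : ℝ) t ∧ 0 < y s} = 0) :
    (∀ t : ℝ, 0 ≤ t → ψ t = 0) ∧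
      ∀ x : ℝ → ℝ,
        (x 0 = x₀ ∧
          ∀ t ∈ Set.Ici (0 : ℝ),
            HasDerivWithinAt x (-β - θ ^ 2 / 2 * (x t) ^ 2) (Set.Ici 0) t) →
        Set.EqOn y x (Set.Ici 0) := by
  have hsol : IsReflectedSolution x₀ β (θ ^ 2 / 2) y ψ :=
    { continuous := hy_cont
      nonneg := hy_nonneg
      monotone := ψ.mono
      flat := fun a b ha hab hpos => ψ.apply_eq_of_measure_Ioc_eq_zero hab <|
        measure_mono_null (fun u hu => show u ∈ {s | s ∈ Icc 0 b ∧ 0 < y s} from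
          ⟨⟨ha.trans hu.1.le, hu.2⟩, hpos u hu⟩) (hflat b (ha.trans hab))
      eq := heq }
  have hψ : ∀ t, 0 ≤ t → ψ t = 0 := fun t ht =>
    (hsol.apply_eq_apply_zero hβ (by positivity) hψ_cont ht).trans hψ0
  refine ⟨hψ, fun x hx => eqOn_of_eq_sub_integral hy_cont (fun t ht => ?_) hx.1 hx.2⟩
  rw [heq t ht, hψ t ht, add_zero]

theorem skorokhod_problem_trivial_reflection (β θ x₀ : ℝ) (hβ : β ≤ 0) (hθ : 0 < θ)
    (hx₀ : 0 ≤ x₀) (y : ℝ → ℝ) (ψ : StieltjesFunction ℝ)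
    (hy_cont : Continuous y) (hψ_cont : Continuous ψ)
    (hy_nonneg : ∀ t : ℝ, 0 ≤ t → 0 ≤ y t)
    (hψ0 : ψ 0 = 0)
    (heq : ∀ t : ℝ, 0 ≤ t →
      y t = x₀ - β * t - θ ^ 2 / 2 * (∫ s in (0 : ℝ)..t, (y s) ^ 2) + ψ t)
    (hflat : ∀ t : ℝ, 0 ≤ t →
      ψ.measure {s | s ∈ Set.Icc (0 : ℝ) t ∧ 0 < y s} = 0) :
    (∀ t : ℝ, 0 ≤ t → ψ t = 0) ∧
      ∀ x : ℝ → ℝ,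
        (x 0 = x₀ ∧
          ∀ t ∈ Set.Ici (0 : ℝ),
            HasDerivWithinAt x (-β - θ ^ 2 / 2 * (x t) ^ 2) (Set.Ici 0) t) →
        Set.EqOn y x (Set.Ici 0) :=
  skorokhod_problem_trivial_reflection_general β θ x₀ hβ y ψ hy_cont hψ_cont hy_nonneg hψ0 heq hflat
end

section
/- Let g_n(s) = γ_n(e^{s/√n} - 1 - s/√n) where γ_n = O(n^{3/4}), and let φ_n = exp(g_n). Then for every k ≥ 1, the k-th derivative of φ_n at 0 satisfies φ_n^{(k)}(0) = O(n^{-k/8}) as n → ∞. -/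
open Filter Asymptotics Finset

lemma iter_cexp (a c : ℝ) (m : ℕ) :
    iteratedDeriv m (fun s : ℝ => a * Real.exp (c * s)) = fun s => a * c ^ m * Real.exp (c * s) := by
  induction m with
  | zero => simp
  | succ j ih =>
    rw [iteratedDeriv_succ, ih]
    funext s
    have h : HasDerivAt (fun s : ℝ => a * c ^ j * Real.exp (c * s))
        (a * c ^ j * (Real.exp (c * s) * c)) s :=
      ((Real.hasDerivAt_exp (c * s)).comp s
        (by simpa using (hasDerivAt_id s).const_mul c)).const_mul _
    rw [h.deriv]; ring

lemma psi_deriv (a c : ℝ) :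
    deriv (fun s : ℝ => a * Real.exp (c * s) - a) = fun s => a * c * Real.exp (c * s) := by
  funext s
  have h : HasDerivAt (fun s : ℝ => a * Real.exp (c * s) - a) (a * (Real.exp (c * s) * c)) s :=
    (((Real.hasDerivAt_exp (c * s)).comp s
      (by simpa using (hasDerivAt_id s).const_mul c)).const_mul a).sub_const a
  rw [h.deriv]; ring

lemma iter_psi (a c : ℝ) (m : ℕ) :
    iteratedDeriv (m + 1) (fun s : ℝ => a * Real.exp (c * s) - a) 0 = a * c ^ (m + 1) := by
  rw [iteratedDeriv_succ', psi_deriv, iter_cexp]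
  simp [pow_succ]; ring

lemma phi_smooth (g c : ℝ) :
    ContDiff ℝ (⊤ : ℕ∞) (fun s : ℝ => Real.exp (g * (Real.exp (c * s) - 1 - c * s))) :=
  Real.contDiff_exp.comp <| contDiff_const.mul <|
    ((Real.contDiff_exp.comp (contDiff_const.mul contDiff_id)).sub contDiff_const).sub
      (contDiff_const.mul contDiff_id)

lemma psi_smooth (g c : ℝ) :
    ContDiff ℝ (⊤ : ℕ∞) (fun s : ℝ => g * c * Real.exp (c * s) - g * c) :=
  (contDiff_const.mul (Real.contDiff_exp.comp (contDiff_const.mul contDiff_id))).sub contDiff_const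

lemma phi_deriv (g c : ℝ) :
    deriv (fun s : ℝ => Real.exp (g * (Real.exp (c * s) - 1 - c * s))) =
      fun s => Real.exp (g * (Real.exp (c * s) - 1 - c * s)) *
        (g * c * Real.exp (c * s) - g * c) := by
  funext s
  have hlin : HasDerivAt (fun s : ℝ => c * s) c s := by
    simpa using (hasDerivAt_id s).const_mul c
  have hinner : HasDerivAt (fun s : ℝ => g * (Real.exp (c * s) - 1 - c * s))
      (g * (Real.exp (c * s) * c - c)) s :=
    ((((Real.hasDerivAt_exp (c * s)).comp s hlin).sub_const 1).sub hlin).const_mul g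
  rw [hinner.exp.deriv]; ring

lemma step_bound (g c : ℝ) (k : ℕ) :
    |iteratedDeriv (k + 1) (fun s : ℝ => Real.exp (g * (Real.exp (c * s) - 1 - c * s))) 0| ≤
      ∑ i ∈ Finset.range (k + 1), (k.choose i : ℝ) *
        |iteratedDeriv i (fun s : ℝ => Real.exp (g * (Real.exp (c * s) - 1 - c * s))) 0| *
        |iteratedDeriv (k - i) (fun s : ℝ => g * c * Real.exp (c * s) - g * c) 0| := by
  rw [iteratedDeriv_succ', phi_deriv]
  calc |iteratedDeriv k (fun s : ℝ => Real.exp (g * (Real.exp (c * s) - 1 - c * s)) *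
        (g * c * Real.exp (c * s) - g * c)) 0|
      = ‖iteratedFDeriv ℝ k (fun s : ℝ => Real.exp (g * (Real.exp (c * s) - 1 - c * s)) *
        (g * c * Real.exp (c * s) - g * c)) 0‖ := by
        rw [norm_iteratedFDeriv_eq_norm_iteratedDeriv, Real.norm_eq_abs]
    _ ≤ ∑ i ∈ Finset.range (k + 1), (k.choose i : ℝ) *
        ‖iteratedFDeriv ℝ i (fun s : ℝ => Real.exp (g * (Real.exp (c * s) - 1 - c * s))) 0‖ *
        ‖iteratedFDeriv ℝ (k - i) (fun s : ℝ => g * c * Real.exp (c * s) - g * c) 0‖ :=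
        norm_iteratedFDeriv_mul_le (phi_smooth g c) (psi_smooth g c) 0 (mod_cast le_top)
    _ = _ := by
        simp only [norm_iteratedFDeriv_eq_norm_iteratedDeriv, Real.norm_eq_abs]
theorem mgf_derivatives_bigO (γ : ℕ → ℝ) (C : ℝ)
    (hγ_pos : ∀ n, 0 < γ n)
    (hγ_O : ∀ n : ℕ, 1 ≤ n → γ n ≤ C * (n : ℝ) ^ ((3 : ℝ) / 4)) :
    ∀ k : ℕ, 1 ≤ k →
      (fun n : ℕ =>
          iteratedDeriv k
            (fun s : ℝ =>
              Real.exp (γ n * (Real.exp (s / Real.sqrt n) - 1 - s / Real.sqrt n))) 0)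
        =O[atTop] fun n : ℕ => (n : ℝ) ^ (-(k : ℝ) / 8) := by
  set C' := max C 0 with hC'def
  have hC' : (0:ℝ) ≤ C' := le_max_right _ _
  have key : ∀ k : ℕ, ∃ D : ℝ, 0 ≤ D ∧ ∀ i ≤ k, ∀ n : ℕ, 1 ≤ n →
      |iteratedDeriv i (fun s : ℝ =>
        Real.exp (γ n * (Real.exp (s / Real.sqrt n) - 1 - s / Real.sqrt n))) 0|
        ≤ D * (n:ℝ) ^ (-(i:ℝ)/8) := by
    intro k
    induction k with
    | zero =>
      refine ⟨1, zero_le_one, ?_⟩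
      intro i hi n hn
      obtain rfl : i = 0 := Nat.le_zero.mp hi
      simp
    | succ k ih =>
      obtain ⟨D, hD0, hD⟩ := ih
      refine ⟨max D (D * C' * 2 ^ k), le_trans hD0 (le_max_left _ _), ?_⟩
      intro i hi n hn
      by_cases hik : i ≤ k
      · exact le_trans (hD i hik n hn)
          (mul_le_mul_of_nonneg_right (le_max_left _ _)
            (Real.rpow_nonneg (Nat.cast_nonneg n) _))
      obtain rfl : i = k + 1 := by omega
      have hn0 : (0:ℝ) < (n:ℝ) := by exact_mod_cast hn
      have hn1 : (1:ℝ) ≤ (n:ℝ) := by exact_mod_cast hn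
      have hs : 0 < Real.sqrt n := Real.sqrt_pos.mpr hn0
      set c : ℝ := (Real.sqrt n)⁻¹ with hcdef
      have hcpos : 0 < c := inv_pos.mpr hs
      have hfun : (fun s : ℝ =>
            Real.exp (γ n * (Real.exp (s / Real.sqrt n) - 1 - s / Real.sqrt n)))
          = fun s : ℝ => Real.exp (γ n * (Real.exp (c * s) - 1 - c * s)) := by
        funext s
        have h : s / Real.sqrt n = c * s := by rw [hcdef]; ring
        rw [h]
      rw [hfun]
      -- bound on derivatives of ψ at 0
      have hcrpow : c = (n:ℝ) ^ (-(1/2) : ℝ) := by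
        rw [hcdef, Real.sqrt_eq_rpow, ← Real.rpow_neg hn0.le]
      have hψb : ∀ m : ℕ,
          |iteratedDeriv m (fun s : ℝ => γ n * c * Real.exp (c * s) - γ n * c) 0|
            ≤ C' * (n:ℝ) ^ (-((m:ℝ)+1)/8) := by
        rintro (_|m)
        · simp [Real.rpow_nonneg, hC', mul_nonneg hC' (Real.rpow_nonneg hn0.le _)]
        · have hval : iteratedDeriv (m+1)
              (fun s : ℝ => γ n * c * Real.exp (c * s) - γ n * c) 0 = γ n * c ^ (m+2) := by
            rw [iter_psi]; ring
          rw [hval, abs_of_nonneg (mul_nonneg (hγ_pos n).le (pow_nonneg hcpos.le _))]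
          have hc' : c ^ (m+2) = (n:ℝ) ^ (-((m:ℝ)+2)/2) := by
            rw [hcrpow, ← Real.rpow_natCast ((n:ℝ) ^ (-(1/2) : ℝ)) (m+2),
              ← Real.rpow_mul hn0.le]
            congr 1; push_cast; ring
          rw [hc']
          have hγ' : γ n ≤ C' * (n:ℝ) ^ ((3:ℝ)/4) :=
            le_trans (hγ_O n hn)
              (mul_le_mul_of_nonneg_right (le_max_left _ _) (Real.rpow_nonneg hn0.le _))
          calc γ n * (n:ℝ) ^ (-((m:ℝ)+2)/2)
              ≤ (C' * (n:ℝ) ^ ((3:ℝ)/4)) * (n:ℝ) ^ (-((m:ℝ)+2)/2) :=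
                mul_le_mul_of_nonneg_right hγ' (Real.rpow_nonneg hn0.le _)
            _ = C' * (n:ℝ) ^ ((3:ℝ)/4 + (-((m:ℝ)+2)/2)) := by
                rw [Real.rpow_add hn0, mul_assoc]
            _ ≤ C' * (n:ℝ) ^ (-((↑(m+1):ℝ)+1)/8) := by
                apply mul_le_mul_of_nonneg_left _ hC'
                apply Real.rpow_le_rpow_of_exponent_le hn1
                push_cast
                have hm : (0:ℝ) ≤ (m:ℝ) := Nat.cast_nonneg m
                linarith
      have hD' : ∀ i ≤ k, |iteratedDeriv i
          (fun s : ℝ => Real.exp (γ n * (Real.exp (c * s) - 1 - c * s))) 0|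
            ≤ D * (n:ℝ) ^ (-(i:ℝ)/8) := by
        intro i hik'
        rw [← hfun]; exact hD i hik' n hn
      refine le_trans (step_bound (γ n) c k) ?_
      have hsum : ∀ i ∈ Finset.range (k+1),
          (k.choose i : ℝ) *
            |iteratedDeriv i (fun s : ℝ => Real.exp (γ n * (Real.exp (c*s) - 1 - c*s))) 0| *
            |iteratedDeriv (k - i) (fun s : ℝ => γ n * c * Real.exp (c*s) - γ n * c) 0|
          ≤ (k.choose i : ℝ) * D * C' * (n:ℝ) ^ (-((k:ℝ)+1)/8) := by
        intro i hi
        have hik' : i ≤ k := Finset.mem_range_succ_iff.mp hi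
        have h1 := hD' i hik'
        have h2 := hψb (k - i)
        have hcast : ((k-i:ℕ):ℝ) = (k:ℝ) - (i:ℝ) := by
          push_cast [hik']; ring
        have hexp : (-(i:ℝ)/8) + (-(((k:ℝ)-(i:ℝ))+1)/8) = -((k:ℝ)+1)/8 := by ring
        calc (k.choose i : ℝ) *
              |iteratedDeriv i (fun s : ℝ => Real.exp (γ n * (Real.exp (c*s) - 1 - c*s))) 0| *
              |iteratedDeriv (k - i) (fun s : ℝ => γ n * c * Real.exp (c*s) - γ n * c) 0|
            ≤ (k.choose i : ℝ) * (D * (n:ℝ) ^ (-(i:ℝ)/8)) *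
              (C' * (n:ℝ) ^ (-(((k:ℝ)-(i:ℝ))+1)/8)) := by
              rw [← hcast] at *
              apply mul_le_mul _ (hcast ▸ h2) (abs_nonneg _)
              · positivity
              · exact mul_le_mul_of_nonneg_left h1 (Nat.cast_nonneg _)
          _ = (k.choose i : ℝ) * D * C' *
              ((n:ℝ) ^ (-(i:ℝ)/8) * (n:ℝ) ^ (-(((k:ℝ)-(i:ℝ))+1)/8)) := by ring
          _ = (k.choose i : ℝ) * D * C' * (n:ℝ) ^ (-((k:ℝ)+1)/8) := by
              rw [← Real.rpow_add hn0, hexp]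
      refine le_trans (Finset.sum_le_sum hsum) ?_
      rw [← Finset.sum_mul, ← Finset.sum_mul, ← Finset.sum_mul]
      have hchoose : ∑ i ∈ Finset.range (k+1), (k.choose i : ℝ) = 2 ^ k := by
        rw [← Nat.cast_sum]
        rw [Nat.sum_range_choose]
        push_cast; ring
      rw [hchoose]
      have hfinal : (2:ℝ) ^ k * D * C' ≤ max D (D * C' * 2 ^ k) := by
        calc (2:ℝ) ^ k * D * C' = D * C' * 2 ^ k := by ring
          _ ≤ _ := le_max_right _ _
      refine le_trans (mul_le_mul_of_nonneg_right hfinal (Real.rpow_nonneg hn0.le _)) ?_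
      apply le_of_eq
      congr 1
      push_cast; ring
  intro k hk
  obtain ⟨D, hD0, hD⟩ := key k
  rw [isBigO_iff]
  refine ⟨D, ?_⟩
  filter_upwards [eventually_ge_atTop 1] with n hn
  have h := hD k le_rfl n hn
  rw [Real.norm_eq_abs, Real.norm_eq_abs,
    abs_of_nonneg (Real.rpow_nonneg (Nat.cast_nonneg n) _)]
  exact h
end
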